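/- arXiv:2209.01459 — 3 statements merged into one kernel-verified Lean document; each statement's English description precedes it below -/
import Mathlib

section
/- If G is a finite connected simple graph on n ≥ 2 vertices, then scw(G) ≤ n − 1. -/
open SimpleGraph

universe u

variable {V : Type u}

/-- A tree-cut decomposition of a finite simple graph `G`: a finite tree `T`
on a node type `B`, together with pairwise disjoint (possibly empty) bags
`bag b ⊆ V` whose union is all of `V`. -/
structure TreeCutDecomp [Finite V] (G : SimpleGraph V) where
  B : Type
  finB : Finite B
  T : SimpleGraph B
  isTree : T.IsTree
  bag : B → Set V
  disj : Pairwise fun b d => Disjoint (bag b) (bag d)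
  covers : ∀ v : V, ∃ b, v ∈ bag b

namespace TreeCutDecomp

variable [Finite V] {G : SimpleGraph V}

/-- The adhesion of a link `l` of `T`: the set of edges of `G` whose endpoints lie in
bags indexed by nodes in different components of `T - l` (equivalently, nodes such that
every walk between them uses `l`). -/
def linkAdh (D : TreeCutDecomp G) (l : Sym2 D.B) : Set (Sym2 V) :=
  {e | e ∈ G.edgeSet ∧ ∃ v w : V, ∃ b d : D.B, e = s(v, w) ∧ v ∈ D.bag b ∧ w ∈ D.bag d ∧
    ∀ p : D.T.Walk b d, l ∈ p.edges}

/-- The adhesion of a node `n` of `T`: the set of edges of `G` whose endpoints lie in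
bags indexed by nodes in different components of `T - n` (equivalently, nodes distinct
from `n` such that every walk between them passes through `n`). -/
def nodeAdh (D : TreeCutDecomp G) (n : D.B) : Set (Sym2 V) :=
  {e | e ∈ G.edgeSet ∧ ∃ v w : V, ∃ b d : D.B, e = s(v, w) ∧ v ∈ D.bag b ∧ w ∈ D.bag d ∧
    b ≠ n ∧ d ≠ n ∧ ∀ p : D.T.Walk b d, n ∈ p.support}

/-- The width of a tree-cut decomposition: the maximum of `|adh(l)|` over links `l` of `T`
and of `|X_b| + |adh(b)|` over nodes `b` of `T`. -/
noncomputable def width (D : TreeCutDecomp G) : ℕ :=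
  sSup ({n | ∃ l ∈ D.T.edgeSet, n = (D.linkAdh l).ncard} ∪
        {n | ∃ b : D.B, n = (D.bag b).ncard + (D.nodeAdh b).ncard})

end TreeCutDecomp

/-- The screewidth of `G`: the minimum width of a tree-cut decomposition of `G`. -/
noncomputable def screewidth [Finite V] (G : SimpleGraph V) : ℕ :=
  sInf {n | ∃ D : TreeCutDecomp G, D.width = n}

lemma top_bool_isTree : (⊤ : SimpleGraph Bool).IsTree := by
  constructor
  · exact connected_top
  · intro u c hc
    have h3 := hc.three_le_length
    have hn : c.support.tail.Nodup := hc.2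
    have := hn.length_le_card
    simp [SimpleGraph.Walk.length_support] at this
    omega


/-- If `G` is a finite connected simple graph on `n ≥ 2` vertices, then
`scw(G) ≤ n - 1`. -/
theorem screewidth_le_card_sub_one [Finite V] (G : SimpleGraph V) (hG : G.Connected)
    (hn : 2 ≤ Nat.card V) :
    screewidth G ≤ Nat.card V - 1 := by
  classical
  have hne : Nonempty V := (Nat.card_pos_iff.mp (by omega)).1
  obtain ⟨v0⟩ := hne
  set D : TreeCutDecomp G :=
    { B := Bool
      finB := inferInstance
      T := ⊤
      isTree := top_bool_isTree
      bag := fun b => if b then {v0} else {v0}ᶜ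
      disj := by
        intro b d hbd
        match b, d with
        | true, false => simp [Set.disjoint_compl_right_iff_subset]
        | false, true =>
          simp [Set.disjoint_compl_left_iff_subset]
        | true, true => exact absurd rfl hbd
        | false, false => exact absurd rfl hbd
      covers := by
        intro v
        by_cases h : v = v0
        · exact ⟨true, by simp [h]⟩
        · exact ⟨false, by simp [h]⟩ } with hD
  -- bags determine node: helper
  have hbag : ∀ (b : Bool) (v : V), v ∈ D.bag b → (b = true → v = v0) ∧ (b = false → v ≠ v0) := by
    intro b v hv
    constructor <;> intro hb <;> subst hb <;> simpa [D] using hv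
  -- node adhesions are empty
  have hnode : ∀ n : Bool, D.nodeAdh n = ∅ := by
    intro n
    ext e
    simp only [TreeCutDecomp.nodeAdh, Set.mem_setOf_eq, Set.mem_empty_iff_false, iff_false]
    rintro ⟨-, v, w, b, d, -, -, -, hb, hd, hwalk⟩
    have hbd : b = d := by
      revert hb hd; match b, d, n with
      | true, true, _ => simp
      | false, false, _ => simp
      | true, false, x => match x with | true => simp | false => simp
      | false, true, x => match x with | true => simp | false => simp
    subst hbd
    have := hwalk SimpleGraph.Walk.nil
    simp at this
    exact hb this.symm
  -- link adhesion bound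
  have hlink : ∀ l : Sym2 Bool, (D.linkAdh l).ncard ≤ Nat.card V - 1 := by
    intro l
    have hsub : D.linkAdh l ⊆ (fun w => s(v0, w)) '' ({v0}ᶜ : Set V) := by
      rintro e ⟨-, v, w, b, d, he, hvb, hwd, hwalk⟩
      have hbd : b ≠ d := by
        rintro rfl
        have := hwalk SimpleGraph.Walk.nil
        simp at this
      match b, d, hbd with
      | true, false, _ =>
        have hv : v = v0 := (hbag true v hvb).1 rfl
        have hw : w ≠ v0 := (hbag false w hwd).2 rfl
        exact ⟨w, hw, by rw [he, hv]⟩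
      | false, true, _ =>
        have hw : w = v0 := (hbag true w hwd).1 rfl
        have hv : v ≠ v0 := (hbag false v hvb).2 rfl
        exact ⟨v, hv, by rw [he, hw, Sym2.eq_swap]⟩
    have hinj : Set.InjOn (fun w => s(v0, w)) ({v0}ᶜ : Set V) := by
      intro a ha b hb hab
      simp only [Sym2.eq, Sym2.rel_iff', Prod.mk.injEq, Prod.swap_prod_mk] at hab
      rcases hab with ⟨-, h⟩ | ⟨h1, h2⟩
      · exact h
      · exact absurd h2 ha
    calc (D.linkAdh l).ncard ≤ ((fun w => s(v0, w)) '' ({v0}ᶜ : Set V)).ncard :=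
          Set.ncard_le_ncard hsub (Set.toFinite _)
      _ = ({v0}ᶜ : Set V).ncard := Set.ncard_image_of_injOn hinj
      _ = Nat.card V - 1 := by
          have := Set.ncard_add_ncard_compl ({v0} : Set V)
          have h1 : ({v0} : Set V).ncard = 1 := Set.ncard_singleton v0
          omega
  -- width bound
  have hwidth : D.width ≤ Nat.card V - 1 := by
    apply csSup_le
    · exact ⟨(D.bag true).ncard + (D.nodeAdh true).ncard, Or.inr ⟨true, rfl⟩⟩
    · rintro n (⟨l, -, rfl⟩ | ⟨b, rfl⟩)
      · exact hlink l
      · rw [hnode b]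
        simp only [Set.ncard_empty, add_zero]
        match b with
        | true =>
          rw [show D.bag true = {v0} from rfl, Set.ncard_singleton]; omega
        | false =>
          rw [show D.bag false = {v0}ᶜ from rfl]
          have := Set.ncard_add_ncard_compl ({v0} : Set V)
          have h1 : ({v0} : Set V).ncard = 1 := Set.ncard_singleton v0
          omega
  exact le_trans (Nat.sInf_le ⟨D, rfl⟩) hwidth
end

section
/- If G is a finite connected simple graph and H is a connected subgraph of G (obtained by deleting edges and vertices from G), then scw(H) ≤ scw(G). -/
open SimpleGraph

universe u

variable {V : Type u}

/-! Restricting every bag of a tree-cut decomposition of `G` to the vertices of `H` gives a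
tree-cut decomposition of `H` on the same tree. Every edge of `H` is an edge of `G` whose ends
sit in the same nodes as before, so each adhesion of the restricted decomposition embeds into
the corresponding adhesion for `G`, and the width cannot grow. -/

namespace TreeCutDecomp

variable {W : Type*} [Finite V] [Finite W] {G : SimpleGraph V} {H : SimpleGraph W}

lemma bddAbove_widthSet (D : TreeCutDecomp G) :
    BddAbove ({n | ∃ l ∈ D.T.edgeSet, n = (D.linkAdh l).ncard} ∪
      {n | ∃ b : D.B, n = (D.bag b).ncard + (D.nodeAdh b).ncard}) := by
  have := D.finB
  refine ((Set.finite_range fun l => (D.linkAdh l).ncard).union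
    (Set.finite_range fun b => (D.bag b).ncard + (D.nodeAdh b).ncard)).bddAbove.mono ?_
  rintro n (⟨l, -, rfl⟩ | ⟨b, rfl⟩)
  exacts [Or.inl ⟨l, rfl⟩, Or.inr ⟨b, rfl⟩]

lemma ncard_linkAdh_le_width (D : TreeCutDecomp G) {l : Sym2 D.B} (hl : l ∈ D.T.edgeSet) :
    (D.linkAdh l).ncard ≤ D.width :=
  le_csSup D.bddAbove_widthSet (Or.inl ⟨l, hl, rfl⟩)

lemma ncard_bag_add_ncard_nodeAdh_le_width (D : TreeCutDecomp G) (b : D.B) :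
    (D.bag b).ncard + (D.nodeAdh b).ncard ≤ D.width :=
  le_csSup D.bddAbove_widthSet (Or.inr ⟨b, rfl⟩)

lemma width_le {D : TreeCutDecomp G} {k : ℕ}
    (hlink : ∀ l ∈ D.T.edgeSet, (D.linkAdh l).ncard ≤ k)
    (hnode : ∀ b, (D.bag b).ncard + (D.nodeAdh b).ncard ≤ k) :
    D.width ≤ k := by
  refine csSup_le' ?_
  rintro n (⟨l, hl, rfl⟩ | ⟨b, rfl⟩)
  exacts [hlink l hl, hnode b]

def single (G : SimpleGraph V) : TreeCutDecomp G where
  B := Unit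
  finB := inferInstance
  T := ⊥
  isTree := .of_subsingleton
  bag _ := Set.univ
  disj _ _ h := absurd (Subsingleton.elim _ _) h
  covers _ := ⟨(), trivial⟩

def comap (D : TreeCutDecomp G) (φ : H →g G) : TreeCutDecomp H where
  B := D.B
  finB := D.finB
  T := D.T
  isTree := D.isTree
  bag b := φ ⁻¹' D.bag b
  disj _ _ h := (D.disj h).preimage φ
  covers v := D.covers (φ v)

lemma mapsTo_linkAdh_comap (D : TreeCutDecomp G) (φ : H →g G) (l : Sym2 D.B) :
    Set.MapsTo (Sym2.map φ) ((D.comap φ).linkAdh l) (D.linkAdh l) := by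
  rintro _ ⟨he, v, w, b, d, rfl, hv, hw, hwalk⟩
  exact ⟨φ.map_adj he, φ v, φ w, b, d, rfl, hv, hw, hwalk⟩

lemma mapsTo_nodeAdh_comap (D : TreeCutDecomp G) (φ : H →g G) (n : D.B) :
    Set.MapsTo (Sym2.map φ) ((D.comap φ).nodeAdh n) (D.nodeAdh n) := by
  rintro _ ⟨he, v, w, b, d, rfl, hv, hw, hb, hd, hwalk⟩
  exact ⟨φ.map_adj he, φ v, φ w, b, d, rfl, hv, hw, hb, hd, hwalk⟩

lemma width_comap_le (D : TreeCutDecomp G) {φ : H →g G} (hφ : Function.Injective φ) :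
    (D.comap φ).width ≤ D.width := by
  have hφ₂ : Function.Injective (Sym2.map φ) := Sym2.map.injective hφ
  refine width_le (fun l hl => ?_) (fun b => ?_)
  · calc ((D.comap φ).linkAdh l).ncard ≤ (D.linkAdh l).ncard :=
          Set.ncard_le_ncard_of_injOn _ (D.mapsTo_linkAdh_comap φ l) hφ₂.injOn
      _ ≤ D.width := D.ncard_linkAdh_le_width hl
  · calc (φ ⁻¹' D.bag b).ncard + ((D.comap φ).nodeAdh b).ncard
        ≤ (D.bag b).ncard + (D.nodeAdh b).ncard := by
          gcongr
          · exact Set.ncard_le_ncard_of_injOn φ (fun _ h => h) hφ.injOn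
          · exact Set.ncard_le_ncard_of_injOn _ (D.mapsTo_nodeAdh_comap φ b) hφ₂.injOn
      _ ≤ D.width := D.ncard_bag_add_ncard_nodeAdh_le_width b

end TreeCutDecomp

section

variable {W : Type*} [Finite V] [Finite W] {G : SimpleGraph V} {H : SimpleGraph W}

lemma screewidth_le_width (D : TreeCutDecomp G) : screewidth G ≤ D.width :=
  Nat.sInf_le ⟨D, rfl⟩

lemma exists_width_eq_screewidth (G : SimpleGraph V) :
    ∃ D : TreeCutDecomp G, D.width = screewidth G :=
  Nat.sInf_mem (s := {n | ∃ D : TreeCutDecomp G, D.width = n}) ⟨_, TreeCutDecomp.single G, rfl⟩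

theorem screewidth_le_of_injective_hom (φ : H →g G) (hφ : Function.Injective φ) :
    screewidth H ≤ screewidth G := by
  obtain ⟨D, hD⟩ := exists_width_eq_screewidth G
  calc screewidth H ≤ (D.comap φ).width := screewidth_le_width _
    _ ≤ D.width := D.width_comap_le hφ
    _ = screewidth G := hD

end

theorem screewidth_subgraph_le_general [Finite V] (G : SimpleGraph V)
    (S : Set V) (H : SimpleGraph S) (hsub : ∀ u v : S, H.Adj u v → G.Adj u v) :
    screewidth H ≤ screewidth G :=
  screewidth_le_of_injective_hom ⟨Subtype.val, hsub _ _⟩ Subtype.val_injective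

/-- If `G` is a finite connected simple graph and `H` is a connected subgraph of `G`
(a graph on a subset `S` of the vertices of `G` all of whose edges are edges of `G`),
then `scw(H) ≤ scw(G)`. -/
theorem screewidth_subgraph_le [Finite V] (G : SimpleGraph V) (hG : G.Connected)
    (S : Set V) (H : SimpleGraph S) (hsub : ∀ u v : S, H.Adj u v → G.Adj u v)
    (hH : H.Connected) :
    screewidth H ≤ screewidth G :=
  screewidth_subgraph_le_general G S H hsub
end

section
/- Let G be a finite connected simple graph and let G' be obtained from G by subdividing one edge, that is, by deleting an edge vw, adding a new vertex u, and adding edges vu and uw. Then scw(G') ≤ scw(G). -/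
open SimpleGraph

universe u

variable {V : Type u}

/-- The graph obtained from `G` by subdividing the edge `vw`: delete the edge `vw`,
add a new vertex (the unique element of the `Unit` summand), and join it to `v` and `w`. -/
def subdivideEdge (G : SimpleGraph V) (v w : V) : SimpleGraph (V ⊕ Unit) :=
  SimpleGraph.fromRel fun a b =>
    (∃ x y : V, a = Sum.inl x ∧ b = Sum.inl y ∧ G.Adj x y ∧ s(x, y) ≠ s(v, w)) ∨
    (∃ x : V, a = Sum.inl x ∧ b = Sum.inr () ∧ (x = v ∨ x = w))

set_option linter.unusedSectionVars false
set_option linter.unnecessarySimpa false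

namespace ScwAux

open Sum

variable {V : Type u} [Finite V] {G : SimpleGraph V}

lemma reach_invar {β : Type} {H : SimpleGraph β} (P : β → Prop)
    (hP : ∀ ⦃x y⦄, H.Adj x y → (P x ↔ P y)) {x y : β} (h : H.Reachable x y) : P x ↔ P y := by
  obtain ⟨p⟩ := h
  induction p with
  | nil => exact Iff.rfl
  | cons h p ih => exact (hP h).trans ih

lemma bag_eq (D : TreeCutDecomp G) {x : V} {b d : D.B} (hb : x ∈ D.bag b) (hd : x ∈ D.bag d) :
    b = d := by
  by_contra h
  exact Set.disjoint_left.mp (D.disj h) hb hd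

lemma widthSet_bddAbove (D : TreeCutDecomp G) :
    BddAbove ({n | ∃ l ∈ D.T.edgeSet, n = (D.linkAdh l).ncard} ∪
      {n | ∃ b : D.B, n = (D.bag b).ncard + (D.nodeAdh b).ncard}) := by
  haveI := D.finB
  apply Set.Finite.bddAbove
  apply Set.Finite.union
  · exact (Set.finite_range fun l : Sym2 D.B => (D.linkAdh l).ncard).subset
      (by rintro n ⟨l, _, rfl⟩; exact ⟨l, rfl⟩)
  · exact (Set.finite_range fun b : D.B => (D.bag b).ncard + (D.nodeAdh b).ncard).subset
      (by rintro n ⟨b, rfl⟩; exact ⟨b, rfl⟩)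

lemma le_width_link (D : TreeCutDecomp G) {l : Sym2 D.B} (hl : l ∈ D.T.edgeSet) :
    (D.linkAdh l).ncard ≤ D.width :=
  le_csSup (widthSet_bddAbove D) (Or.inl ⟨l, hl, rfl⟩)

lemma le_width_node (D : TreeCutDecomp G) (b : D.B) :
    (D.bag b).ncard + (D.nodeAdh b).ncard ≤ D.width :=
  le_csSup (widthSet_bddAbove D) (Or.inr ⟨b, rfl⟩)

lemma width_le (D : TreeCutDecomp G) [Nonempty D.B] {n : ℕ}
    (h1 : ∀ l ∈ D.T.edgeSet, (D.linkAdh l).ncard ≤ n)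
    (h2 : ∀ b : D.B, (D.bag b).ncard + (D.nodeAdh b).ncard ≤ n) : D.width ≤ n := by
  rw [TreeCutDecomp.width]
  refine csSup_le ⟨(D.bag (Classical.arbitrary D.B)).ncard +
    (D.nodeAdh (Classical.arbitrary D.B)).ncard, Or.inr ⟨_, rfl⟩⟩ ?_
  rintro m (⟨l, hl, rfl⟩ | ⟨b, rfl⟩)
  exacts [h1 l hl, h2 b]

noncomputable def trivialDecomp (G : SimpleGraph V) : TreeCutDecomp G where
  B := Unit
  finB := inferInstance
  T := ⊥
  isTree := ⟨⟨fun x y => by cases x; cases y; exact Reachable.refl _⟩, isAcyclic_bot⟩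
  bag := fun _ => Set.univ
  disj := fun x y h => absurd (Subsingleton.elim x y) h
  covers := fun v => ⟨(), Set.mem_univ v⟩


lemma subdivide_adj {v w : V} {a b : V ⊕ Unit} :
    (subdivideEdge G v w).Adj a b ↔
      (∃ x y, a = inl x ∧ b = inl y ∧ G.Adj x y ∧ s(x, y) ≠ s(v, w)) ∨
      ((a = inl v ∨ a = inl w) ∧ b = inr ()) ∨
      ((b = inl v ∨ b = inl w) ∧ a = inr ()) := by
  rw [subdivideEdge, fromRel_adj]
  constructor
  · rintro ⟨hne, (⟨x, y, rfl, rfl, h, hn⟩ | ⟨x, rfl, rfl, hx⟩) |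
      (⟨x, y, rfl, rfl, h, hn⟩ | ⟨x, rfl, rfl, hx⟩)⟩
    · exact Or.inl ⟨x, y, rfl, rfl, h, hn⟩
    · rcases hx with rfl | rfl
      exacts [Or.inr (Or.inl ⟨Or.inl rfl, rfl⟩), Or.inr (Or.inl ⟨Or.inr rfl, rfl⟩)]
    · exact Or.inl ⟨y, x, rfl, rfl, h.symm, by rwa [Sym2.eq_swap]⟩
    · rcases hx with rfl | rfl
      exacts [Or.inr (Or.inr ⟨Or.inl rfl, rfl⟩), Or.inr (Or.inr ⟨Or.inr rfl, rfl⟩)]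
  · rintro (⟨x, y, rfl, rfl, h, hn⟩ | ⟨(rfl | rfl), rfl⟩ | ⟨(rfl | rfl), rfl⟩)
    · exact ⟨by simpa using h.ne, Or.inl (Or.inl ⟨x, y, rfl, rfl, h, hn⟩)⟩
    · exact ⟨by simp, Or.inl (Or.inr ⟨v, rfl, rfl, Or.inl rfl⟩)⟩
    · exact ⟨by simp, Or.inl (Or.inr ⟨w, rfl, rfl, Or.inr rfl⟩)⟩
    · exact ⟨by simp, Or.inr (Or.inr ⟨v, rfl, rfl, Or.inl rfl⟩)⟩
    · exact ⟨by simp, Or.inr (Or.inr ⟨w, rfl, rfl, Or.inr rfl⟩)⟩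

/-- The bags of the new decomposition. -/
def bagX (D : TreeCutDecomp G) : D.B ⊕ Unit → Set (V ⊕ Unit) :=
  Sum.elim (fun b => Sum.inl '' D.bag b) fun _ => {Sum.inr ()}

lemma mem_bagX_inl {D : TreeCutDecomp G} {x₀ : V} {b' : D.B ⊕ Unit}
    (h : inl x₀ ∈ bagX D b') : ∃ b₀, b' = inl b₀ ∧ x₀ ∈ D.bag b₀ := by
  cases b' with
  | inl b₀ =>
    obtain ⟨x₁, hx₁, hx⟩ := h
    obtain rfl := inl_injective hx
    exact ⟨b₀, rfl, hx₁⟩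
  | inr u => simp [bagX] at h

lemma mem_bagX_inr {D : TreeCutDecomp G} {b' : D.B ⊕ Unit}
    (h : (inr () : V ⊕ Unit) ∈ bagX D b') : b' = inr () := by
  cases b' with
  | inl b₀ => simp [bagX] at h
  | inr u => cases u; rfl

/-- The new tree-cut decomposition built from a tree `T'` on `D.B ⊕ Unit`. -/
def mkD' (v w : V) (D : TreeCutDecomp G) (T' : SimpleGraph (D.B ⊕ Unit)) (hT' : T'.IsTree) :
    TreeCutDecomp (subdivideEdge G v w) where
  B := D.B ⊕ Unit
  finB := by haveI := D.finB; infer_instance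
  T := T'
  isTree := hT'
  bag := bagX D
  disj := by
    rintro (b | b) (d | d) hne
    · refine Set.disjoint_left.mpr ?_
      rintro x ⟨x₀, hx₀, rfl⟩ ⟨x₁, hx₁, hx⟩
      rw [inl.injEq] at hx
      subst hx
      exact Set.disjoint_left.mp (D.disj (by simpa using hne)) hx₀ hx₁
    · refine Set.disjoint_left.mpr ?_
      rintro x ⟨x₀, hx₀, rfl⟩ hx
      simp [bagX] at hx
    · refine Set.disjoint_left.mpr ?_
      rintro x hx ⟨x₀, hx₀, rfl⟩
      simp [bagX] at hx
    · cases b; cases d; exact absurd rfl hne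
  covers := by
    rintro (x | u)
    · obtain ⟨b, hb⟩ := D.covers x
      exact ⟨inl b, ⟨x, hb, rfl⟩⟩
    · cases u; exact ⟨inr (), rfl⟩

lemma linkAdh_elim {v w : V} {D : TreeCutDecomp G} {T' : SimpleGraph (D.B ⊕ Unit)}
    {hT' : T'.IsTree} {b_v b_w : D.B} (hv : v ∈ D.bag b_v) (hw : w ∈ D.bag b_w)
    {l' : Sym2 (D.B ⊕ Unit)} {e' : Sym2 (V ⊕ Unit)}
    (he' : e' ∈ (mkD' v w D T' hT').linkAdh l') :
    (∃ a b p q, e' = s(inl a, inl b) ∧ G.Adj a b ∧ s(a, b) ≠ s(v, w) ∧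
        a ∈ D.bag p ∧ b ∈ D.bag q ∧ ∀ W : T'.Walk (inl p) (inl q), l' ∈ W.edges) ∨
    (e' = s(inl v, inr ()) ∧ ∀ W : T'.Walk (inl b_v) (inr ()), l' ∈ W.edges) ∨
    (e' = s(inl w, inr ()) ∧ ∀ W : T'.Walk (inl b_w) (inr ()), l' ∈ W.edges) := by
  obtain ⟨hE, x, y, b, d, he, hx, hy, H⟩ := he'
  subst he
  rw [mem_edgeSet] at hE
  rcases subdivide_adj.mp hE with ⟨x₀, y₀, rfl, rfl, hadj, hne⟩ | ⟨hxv, rfl⟩ | ⟨hyv, rfl⟩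
  · obtain ⟨p, rfl, hxp⟩ := mem_bagX_inl hx
    obtain ⟨q, rfl, hyq⟩ := mem_bagX_inl hy
    exact Or.inl ⟨x₀, y₀, p, q, rfl, hadj, hne, hxp, hyq, H⟩
  · have hd := mem_bagX_inr hy
    subst hd
    rcases hxv with rfl | rfl
    · obtain ⟨p, rfl, hxp⟩ := mem_bagX_inl hx
      obtain rfl : p = b_v := bag_eq D hxp hv
      exact Or.inr (Or.inl ⟨rfl, H⟩)
    · obtain ⟨p, rfl, hxp⟩ := mem_bagX_inl hx
      obtain rfl : p = b_w := bag_eq D hxp hw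
      exact Or.inr (Or.inr ⟨rfl, H⟩)
  · have hb := mem_bagX_inr hx
    subst hb
    rcases hyv with rfl | rfl
    · obtain ⟨q, rfl, hyq⟩ := mem_bagX_inl hy
      obtain rfl : q = b_v := bag_eq D hyq hv
      refine Or.inr (Or.inl ⟨Sym2.eq_swap, fun W => ?_⟩)
      have this : l' ∈ W.reverse.edges := H W.reverse
      rwa [Walk.edges_reverse, List.mem_reverse] at this
    · obtain ⟨q, rfl, hyq⟩ := mem_bagX_inl hy
      obtain rfl : q = b_w := bag_eq D hyq hw
      refine Or.inr (Or.inr ⟨Sym2.eq_swap, fun W => ?_⟩)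
      have this : l' ∈ W.reverse.edges := H W.reverse
      rwa [Walk.edges_reverse, List.mem_reverse] at this

lemma nodeAdh_elim {v w : V} {D : TreeCutDecomp G} {T' : SimpleGraph (D.B ⊕ Unit)}
    {hT' : T'.IsTree} {b_v b_w : D.B} (hv : v ∈ D.bag b_v) (hw : w ∈ D.bag b_w)
    {n : D.B ⊕ Unit} {e' : Sym2 (V ⊕ Unit)}
    (he' : e' ∈ (mkD' v w D T' hT').nodeAdh n) :
    (∃ a b p q, e' = s(inl a, inl b) ∧ G.Adj a b ∧ s(a, b) ≠ s(v, w) ∧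
        a ∈ D.bag p ∧ b ∈ D.bag q ∧ inl p ≠ n ∧ inl q ≠ n ∧
        ∀ W : T'.Walk (inl p) (inl q), n ∈ W.support) ∨
    (e' = s(inl v, inr ()) ∧ inl b_v ≠ n ∧ inr () ≠ n ∧
        ∀ W : T'.Walk (inl b_v) (inr ()), n ∈ W.support) ∨
    (e' = s(inl w, inr ()) ∧ inl b_w ≠ n ∧ inr () ≠ n ∧
        ∀ W : T'.Walk (inl b_w) (inr ()), n ∈ W.support) := by
  obtain ⟨hE, x, y, b, d, he, hx, hy, hbn, hdn, H⟩ := he'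
  subst he
  rw [mem_edgeSet] at hE
  rcases subdivide_adj.mp hE with ⟨x₀, y₀, rfl, rfl, hadj, hne⟩ | ⟨hxv, rfl⟩ | ⟨hyv, rfl⟩
  · obtain ⟨p, rfl, hxp⟩ := mem_bagX_inl hx
    obtain ⟨q, rfl, hyq⟩ := mem_bagX_inl hy
    exact Or.inl ⟨x₀, y₀, p, q, rfl, hadj, hne, hxp, hyq, hbn, hdn, H⟩
  · have hd := mem_bagX_inr hy
    subst hd
    rcases hxv with rfl | rfl
    · obtain ⟨p, rfl, hxp⟩ := mem_bagX_inl hx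
      obtain rfl : p = b_v := bag_eq D hxp hv
      exact Or.inr (Or.inl ⟨rfl, hbn, hdn, H⟩)
    · obtain ⟨p, rfl, hxp⟩ := mem_bagX_inl hx
      obtain rfl : p = b_w := bag_eq D hxp hw
      exact Or.inr (Or.inr ⟨rfl, hbn, hdn, H⟩)
  · have hb := mem_bagX_inr hx
    subst hb
    rcases hyv with rfl | rfl
    · obtain ⟨q, rfl, hyq⟩ := mem_bagX_inl hy
      obtain rfl : q = b_v := bag_eq D hyq hv
      refine Or.inr (Or.inl ⟨Sym2.eq_swap, hdn, hbn, fun W => ?_⟩)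
      have this : n ∈ W.reverse.support := H W.reverse
      rwa [Walk.support_reverse, List.mem_reverse] at this
    · obtain ⟨q, rfl, hyq⟩ := mem_bagX_inl hy
      obtain rfl : q = b_w := bag_eq D hyq hw
      refine Or.inr (Or.inr ⟨Sym2.eq_swap, hdn, hbn, fun W => ?_⟩)
      have this : n ∈ W.reverse.support := H W.reverse
      rwa [Walk.support_reverse, List.mem_reverse] at this

open scoped Classical in
/-- The injection used to compare adhesion sets. -/
noncomputable def gmap (v w z : V) : Sym2 V → Sym2 (V ⊕ Unit) := fun e =>
  if e = s(v, w) then s(inl z, inr ()) else Sym2.map inl e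

lemma gmap_apply_ne {v w z : V} {e : Sym2 V} (h : e ≠ s(v, w)) :
    gmap v w z e = Sym2.map inl e := by
  rw [gmap, if_neg h]

lemma gmap_apply_eq (v w z : V) : gmap v w z s(v, w) = s(inl z, inr ()) := by
  rw [gmap, if_pos rfl]

lemma map_inl_ne_inr {e : Sym2 V} {a : V} :
    Sym2.map (inl : V → V ⊕ Unit) e ≠ s(inl a, inr ()) := by
  intro h
  have : (inr () : V ⊕ Unit) ∈ Sym2.map (inl : V → V ⊕ Unit) e := by
    rw [h]; exact Sym2.mem_mk_right _ _
  rw [Sym2.mem_map] at this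
  obtain ⟨x, _, hx⟩ := this
  exact inl_ne_inr hx

lemma gmap_inj (v w z : V) : Function.Injective (gmap v w z) := by
  intro e₁ e₂ h
  rw [gmap, gmap] at h
  split_ifs at h with h1 h2 h2
  · exact h1.trans h2.symm
  · exact absurd h.symm map_inl_ne_inr
  · exact absurd h map_inl_ne_inr
  · exact Sym2.map.injective inl_injective h

lemma ncard_le_of_subset_image {A : Set (Sym2 (V ⊕ Unit))} {Bs : Set (Sym2 V)}
    {g : Sym2 V → Sym2 (V ⊕ Unit)} (hg : Function.Injective g) (h : A ⊆ g '' Bs) :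
    A.ncard ≤ Bs.ncard :=
  (Set.ncard_le_ncard h (Set.toFinite _)).trans_eq (Set.ncard_image_of_injective _ hg)


/-! ### Case B: both endpoints of the subdivided edge lie in the same bag -/

section CaseB

variable (D : TreeCutDecomp G) (b₀ : D.B)

/-- The tree for case B: attach a pendant node to `b₀`. -/
def TB : SimpleGraph (D.B ⊕ Unit) :=
  fromRel fun a b => (∃ p q, a = inl p ∧ b = inl q ∧ D.T.Adj p q) ∨ (a = inl b₀ ∧ b = inr ())

lemma TB_adj {a b : D.B ⊕ Unit} : (TB D b₀).Adj a b ↔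
    (∃ p q, a = inl p ∧ b = inl q ∧ D.T.Adj p q) ∨
    (a = inl b₀ ∧ b = inr ()) ∨ (a = inr () ∧ b = inl b₀) := by
  rw [TB, fromRel_adj]
  constructor
  · rintro ⟨hne, (⟨p, q, rfl, rfl, h⟩ | ⟨rfl, rfl⟩) | (⟨p, q, rfl, rfl, h⟩ | ⟨rfl, rfl⟩)⟩
    · exact Or.inl ⟨p, q, rfl, rfl, h⟩
    · exact Or.inr (Or.inl ⟨rfl, rfl⟩)
    · exact Or.inl ⟨q, p, rfl, rfl, h.symm⟩
    · exact Or.inr (Or.inr ⟨rfl, rfl⟩)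
  · rintro (⟨p, q, rfl, rfl, h⟩ | ⟨rfl, rfl⟩ | ⟨rfl, rfl⟩)
    · exact ⟨by simpa using h.ne, Or.inl (Or.inl ⟨p, q, rfl, rfl, h⟩)⟩
    · exact ⟨by simp, Or.inl (Or.inr ⟨rfl, rfl⟩)⟩
    · exact ⟨by simp, Or.inr (Or.inr ⟨rfl, rfl⟩)⟩

lemma TB_adj_pendant : (TB D b₀).Adj (inl b₀) (inr ()) :=
  (TB_adj D b₀).mpr (Or.inr (Or.inl ⟨rfl, rfl⟩))

/-- The embedding of `T` into `TB`. -/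
def homB : D.T →g TB D b₀ :=
  ⟨inl, fun h => (TB_adj D b₀).mpr (Or.inl ⟨_, _, rfl, rfl, h⟩)⟩

lemma TB_bridge_pendant : (TB D b₀).IsBridge s(inl b₀, inr ()) := by
  rw [isBridge_iff]
  refine fun hr => ?_
  have hinv : ∀ ⦃x y : D.B ⊕ Unit⦄,
      ((TB D b₀) \ fromEdgeSet {s(inl b₀, inr ())}).Adj x y →
      ((Sum.elim (fun _ => True) fun _ => False) x ↔
       (Sum.elim (fun _ => True) fun _ => False) y) := by
    intro x y hxy
    rw [sdiff_adj, fromEdgeSet_adj] at hxy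
    obtain ⟨hadj, hne⟩ := hxy
    have hne' : s(x, y) ≠ s(inl b₀, inr ()) := fun hc => hne ⟨hc, hadj.ne⟩
    rcases (TB_adj D b₀).mp hadj with ⟨p, q, rfl, rfl, h⟩ | ⟨rfl, rfl⟩ | ⟨rfl, rfl⟩
    · simp
    · exact absurd rfl hne'
    · exact absurd Sym2.eq_swap hne'
  simpa using reach_invar _ hinv hr

lemma TB_isTree : (TB D b₀).IsTree := by
  constructor
  · have hc : ∀ x : D.B ⊕ Unit, (TB D b₀).Reachable x (inl b₀) := by
      rintro (a | u)
      · exact (D.isTree.isConnected.preconnected a b₀).map (homB D b₀)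
      · cases u; exact (TB_adj_pendant D b₀).symm.reachable
    exact ⟨fun x y => (hc x).trans (hc y).symm⟩
  · rw [isAcyclic_iff_forall_edge_isBridge]
    intro e he
    induction e with
    | _ x y =>
      rw [mem_edgeSet] at he
      rcases (TB_adj D b₀).mp he with ⟨p, q, rfl, rfl, h⟩ | ⟨rfl, rfl⟩ | ⟨rfl, rfl⟩
      · rw [isBridge_iff]
        refine fun hr => ?_
        have hbr : ¬(D.T \ fromEdgeSet {s(p, q)}).Reachable p q :=
          (isBridge_iff.mp (isAcyclic_iff_forall_edge_isBridge.mp D.isTree.IsAcyclic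
            ((mem_edgeSet _).mpr h)))
        set Td := D.T \ fromEdgeSet {s(p, q)} with hTd
        have hinv : ∀ ⦃x y : D.B ⊕ Unit⦄,
            ((TB D b₀) \ fromEdgeSet {s(inl p, inl q)}).Adj x y →
            ((Sum.elim (fun b => Td.Reachable p b) fun _ => Td.Reachable p b₀) x ↔
             (Sum.elim (fun b => Td.Reachable p b) fun _ => Td.Reachable p b₀) y) := by
          intro x y hxy
          rw [sdiff_adj, fromEdgeSet_adj] at hxy
          obtain ⟨hadj, hne⟩ := hxy
          have hne' : s(x, y) ≠ s(inl p, inl q) := fun hc => hne ⟨hc, hadj.ne⟩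
          rcases (TB_adj D b₀).mp hadj with ⟨p', q', rfl, rfl, h'⟩ | ⟨rfl, rfl⟩ | ⟨rfl, rfl⟩
          · have hne'' : s(p', q') ≠ s(p, q) := by
              intro hc
              apply hne'
              have := congrArg (Sym2.map (inl : D.B → D.B ⊕ Unit)) hc
              rwa [Sym2.map_pair_eq, Sym2.map_pair_eq] at this
            have hstep : Td.Adj p' q' := by
              rw [hTd, sdiff_adj, fromEdgeSet_adj]
              exact ⟨h', fun hc => hne'' hc.1⟩
            exact ⟨fun hh => hh.trans hstep.reachable,
              fun hh => hh.trans hstep.symm.reachable⟩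
          · exact Iff.rfl
          · exact Iff.rfl
        have := reach_invar _ hinv hr
        simp only [Sum.elim_inl] at this
        exact hbr (this.mp (Reachable.refl p))
      · exact TB_bridge_pendant D b₀
      · rw [Sym2.eq_swap]
        exact TB_bridge_pendant D b₀

variable {v w : V}

lemma caseB_width (hvw : G.Adj v w) (hv : v ∈ D.bag b₀) (hw : w ∈ D.bag b₀) :
    (mkD' v w D (TB D b₀) (TB_isTree D b₀)).width ≤ D.width := by
  haveI := D.finB
  set D' := mkD' v w D (TB D b₀) (TB_isTree D b₀) with hD'
  haveI : Nonempty D'.B := ⟨inr ()⟩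
  have hbag2 : 2 ≤ (D.bag b₀).ncard := by
    have hsub : ({v, w} : Set V) ⊆ D.bag b₀ := by
      rintro x (rfl | rfl)
      exacts [hv, hw]
    calc 2 = ({v, w} : Set V).ncard := (Set.ncard_pair hvw.ne).symm
      _ ≤ (D.bag b₀).ncard := Set.ncard_le_ncard hsub (Set.toFinite _)
  -- bound for the pendant link
  have hpend : (D'.linkAdh s(inl b₀, inr ())).ncard ≤ D.width := by
    have hsub : D'.linkAdh s(inl b₀, inr ()) ⊆
        {s(inl v, inr ()), s((inl w : V ⊕ Unit), inr ())} := by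
      intro e' he'
      rcases linkAdh_elim hv hw he' with
        ⟨a, b, p₀, q₀, rfl, hab, hne, hap, hbq, H⟩ | ⟨rfl, _⟩ | ⟨rfl, _⟩
      · exfalso
        obtain ⟨r⟩ := D.isTree.isConnected.preconnected p₀ q₀
        have : s(inl b₀, inr ()) ∈ (r.map (homB D b₀)).edges := H (r.map (homB D b₀))
        rw [Walk.edges_map, List.mem_map] at this
        obtain ⟨e₀, _, heq⟩ := this
        exact map_inl_ne_inr heq
      · exact Or.inl rfl
      · exact Or.inr rfl
    calc (D'.linkAdh s(inl b₀, inr ())).ncard ≤ 2 := by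
          refine (Set.ncard_le_ncard hsub (Set.toFinite _)).trans ?_
          exact (Set.ncard_insert_le _ _).trans (by simp)
      _ ≤ (D.bag b₀).ncard + (D.nodeAdh b₀).ncard := le_add_right hbag2
      _ ≤ D.width := le_width_node D b₀
  apply width_le
  · -- links
    intro l' hl'
    induction l' with
    | _ x y =>
      rw [mem_edgeSet] at hl'
      rcases (TB_adj D b₀).mp hl' with ⟨p, q, rfl, rfl, hpq⟩ | ⟨rfl, rfl⟩ | ⟨rfl, rfl⟩
      · refine le_trans (ncard_le_of_subset_image
          (Sym2.map.injective (inl_injective : Function.Injective (inl : V → V ⊕ Unit))) ?_)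
          (le_width_link D ((mem_edgeSet _).mpr hpq))
        intro e' he'
        rcases linkAdh_elim hv hw he' with
          ⟨a, b, p₀, q₀, rfl, hab, hne, hap, hbq, H⟩ | ⟨rfl, H⟩ | ⟨rfl, H⟩
        · refine ⟨s(a, b), ⟨(mem_edgeSet _).mpr hab, a, b, p₀, q₀, rfl, hap, hbq, ?_⟩,
            Sym2.map_pair_eq _ _ _⟩
          intro r
          have : s(inl p, inl q) ∈ (r.map (homB D b₀)).edges := H (r.map (homB D b₀))
          rw [Walk.edges_map, List.mem_map] at this
          obtain ⟨e₀, he₀, heq⟩ := this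
          have : e₀ = s(p, q) := Sym2.map.injective inl_injective
            (heq.trans (Sym2.map_pair_eq inl p q).symm)
          exact this ▸ he₀
        · exfalso
          have : s(inl p, inl q) ∈ (Walk.cons (TB_adj_pendant D b₀) Walk.nil).edges :=
            H (Walk.cons (TB_adj_pendant D b₀) Walk.nil)
          simp only [Walk.edges_cons, Walk.edges_nil, List.mem_singleton] at this
          rw [Sym2.eq_iff] at this
          rcases this with ⟨_, hc⟩ | ⟨hc, _⟩ <;> exact inl_ne_inr hc
        · exfalso
          have : s(inl p, inl q) ∈ (Walk.cons (TB_adj_pendant D b₀) Walk.nil).edges :=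
            H (Walk.cons (TB_adj_pendant D b₀) Walk.nil)
          simp only [Walk.edges_cons, Walk.edges_nil, List.mem_singleton] at this
          rw [Sym2.eq_iff] at this
          rcases this with ⟨_, hc⟩ | ⟨hc, _⟩ <;> exact inl_ne_inr hc
      · exact hpend
      · exact (congrArg (fun l => (D'.linkAdh l).ncard)
          (Sym2.eq_swap (a := (inr () : D.B ⊕ Unit)) (b := inl b₀))).trans_le hpend
  · -- nodes
    rintro (n | u)
    · have hbag : (D'.bag (inl n)).ncard = (D.bag n).ncard :=
        Set.ncard_image_of_injective _ inl_injective
      rw [hbag]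
      refine le_trans (Nat.add_le_add_left ?_ _) (le_width_node D n)
      refine ncard_le_of_subset_image
        (Sym2.map.injective (inl_injective : Function.Injective (inl : V → V ⊕ Unit))) ?_
      intro e' he'
      rcases nodeAdh_elim hv hw he' with
        ⟨a, b, p₀, q₀, rfl, hab, hne, hap, hbq, hpn, hqn, H⟩ |
        ⟨rfl, hbn, _, H⟩ | ⟨rfl, hbn, _, H⟩
      · refine ⟨s(a, b), ⟨(mem_edgeSet _).mpr hab, a, b, p₀, q₀, rfl, hap, hbq,
          fun hc => hpn (by rw [hc]), fun hc => hqn (by rw [hc]), ?_⟩,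
          Sym2.map_pair_eq _ _ _⟩
        intro r
        have : (inl n : D.B ⊕ Unit) ∈ (r.map (homB D b₀)).support := H (r.map (homB D b₀))
        rw [Walk.support_map, List.mem_map] at this
        obtain ⟨y₀, hy₀, heq⟩ := this
        obtain rfl := inl_injective heq
        exact hy₀
      · exfalso
        have : (inl n : D.B ⊕ Unit) ∈ (Walk.cons (TB_adj_pendant D b₀) Walk.nil).support :=
            H (Walk.cons (TB_adj_pendant D b₀) Walk.nil)
        simp only [Walk.support_cons, Walk.support_nil, List.mem_cons,
          List.mem_singleton, List.not_mem_nil, or_false] at this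
        rcases this with hc | hc
        · exact hbn hc.symm
        · exact inl_ne_inr hc
      · exfalso
        have : (inl n : D.B ⊕ Unit) ∈ (Walk.cons (TB_adj_pendant D b₀) Walk.nil).support :=
            H (Walk.cons (TB_adj_pendant D b₀) Walk.nil)
        simp only [Walk.support_cons, Walk.support_nil, List.mem_cons,
          List.mem_singleton, List.not_mem_nil, or_false] at this
        rcases this with hc | hc
        · exact hbn hc.symm
        · exact inl_ne_inr hc
    · cases u
      have h0 : D'.nodeAdh (inr ()) = ∅ := by
        ext e'
        simp only [Set.mem_empty_iff_false, iff_false]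
        intro he'
        rcases nodeAdh_elim hv hw he' with
          ⟨a, b, p₀, q₀, rfl, hab, hne, hap, hbq, hpn, hqn, H⟩ |
          ⟨_, _, hcn, _⟩ | ⟨_, _, hcn, _⟩
        · obtain ⟨r⟩ := D.isTree.isConnected.preconnected p₀ q₀
          have : (inr () : D.B ⊕ Unit) ∈ (r.map (homB D b₀)).support := H (r.map (homB D b₀))
          rw [Walk.support_map, List.mem_map] at this
          obtain ⟨y₀, _, heq⟩ := this
          exact inl_ne_inr heq
        · exact hcn rfl
        · exact hcn rfl
      have hbag : (D'.bag (inr ())).ncard = 1 := Set.ncard_singleton _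
      rw [h0, hbag, Set.ncard_empty]
      calc 1 + 0 = 1 := rfl
        _ ≤ (D.bag b₀).ncard + (D.nodeAdh b₀).ncard :=
          le_add_right (le_trans one_le_two hbag2)
        _ ≤ D.width := le_width_node D b₀

end CaseB


/-! ### Case A: the endpoints of the subdivided edge lie in different bags -/

lemma sym2_inl_ne {β : Type} {a b c : β} :
    s((inl a : β ⊕ Unit), inl b) ≠ s(inl c, inr ()) := by
  intro hc
  rw [Sym2.eq_iff] at hc
  rcases hc with ⟨_, h⟩ | ⟨h, _⟩ <;> exact inl_ne_inr h

lemma sym2_pendant_inj {β : Type} {a c : β}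
    (h : s((inl a : β ⊕ Unit), inr ()) = s(inl c, inr ())) : a = c := by
  rw [Sym2.eq_iff] at h
  rcases h with ⟨h1, _⟩ | ⟨h1, _⟩
  · exact inl_injective h1
  · exact absurd h1 inl_ne_inr

lemma mem_sdiff_edgeSet {β : Type u} {H : SimpleGraph β} {l e : Sym2 β}
    (he : e ∈ H.edgeSet) (hne : e ≠ l) : e ∈ (H \ fromEdgeSet {l}).edgeSet := by
  induction e with
  | _ a b =>
    rw [mem_edgeSet] at he ⊢
    rw [sdiff_adj, fromEdgeSet_adj]
    exact ⟨he, fun hc => hne hc.1⟩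

section CaseA

variable (D : TreeCutDecomp G) (b_v m : D.B)

/-- The tree for case A: subdivide the link between `b_v` and `m`. -/
def TA : SimpleGraph (D.B ⊕ Unit) :=
  fromRel fun a b =>
    (∃ p q, a = inl p ∧ b = inl q ∧ D.T.Adj p q ∧ s(p, q) ≠ s(b_v, m)) ∨
    ((a = inl b_v ∨ a = inl m) ∧ b = inr ())

lemma TA_adj {a b : D.B ⊕ Unit} : (TA D b_v m).Adj a b ↔
    (∃ p q, a = inl p ∧ b = inl q ∧ D.T.Adj p q ∧ s(p, q) ≠ s(b_v, m)) ∨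
    ((a = inl b_v ∨ a = inl m) ∧ b = inr ()) ∨
    ((b = inl b_v ∨ b = inl m) ∧ a = inr ()) := by
  rw [TA, fromRel_adj]
  constructor
  · rintro ⟨hne, (⟨p, q, rfl, rfl, h, hn⟩ | ⟨hx, rfl⟩) |
      (⟨p, q, rfl, rfl, h, hn⟩ | ⟨hx, rfl⟩)⟩
    · exact Or.inl ⟨p, q, rfl, rfl, h, hn⟩
    · exact Or.inr (Or.inl ⟨hx, rfl⟩)
    · exact Or.inl ⟨q, p, rfl, rfl, h.symm, by rwa [Sym2.eq_swap]⟩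
    · exact Or.inr (Or.inr ⟨hx, rfl⟩)
  · rintro (⟨p, q, rfl, rfl, h, hn⟩ | ⟨hx, rfl⟩ | ⟨hx, rfl⟩)
    · exact ⟨by simpa using h.ne, Or.inl (Or.inl ⟨p, q, rfl, rfl, h, hn⟩)⟩
    · exact ⟨by rcases hx with rfl | rfl <;> simp, Or.inl (Or.inr ⟨hx, rfl⟩)⟩
    · exact ⟨by rcases hx with rfl | rfl <;> simp, Or.inr (Or.inr ⟨hx, rfl⟩)⟩

lemma TA_adj_e1 : (TA D b_v m).Adj (inl b_v) (inr ()) :=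
  (TA_adj D b_v m).mpr (Or.inr (Or.inl ⟨Or.inl rfl, rfl⟩))

lemma TA_adj_e2 : (TA D b_v m).Adj (inl m) (inr ()) :=
  (TA_adj D b_v m).mpr (Or.inr (Or.inl ⟨Or.inr rfl, rfl⟩))

lemma TA_adj_old {p q : D.B} (h : D.T.Adj p q) (hn : s(p, q) ≠ s(b_v, m)) :
    (TA D b_v m).Adj (inl p) (inl q) :=
  (TA_adj D b_v m).mpr (Or.inl ⟨p, q, rfl, rfl, h, hn⟩)

lemma adj_c_left {p q : D.B} (hn : s(p, q) = s(b_v, m)) :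
    (TA D b_v m).Adj (inl p) (inr ()) := by
  rcases Sym2.eq_iff.mp hn with ⟨hp, _⟩ | ⟨hp, _⟩ <;> rw [hp]
  exacts [TA_adj_e1 D b_v m, TA_adj_e2 D b_v m]

lemma adj_c_right {p q : D.B} (hn : s(p, q) = s(b_v, m)) :
    (TA D b_v m).Adj (inr ()) (inl q) := by
  rcases Sym2.eq_iff.mp hn with ⟨_, hq⟩ | ⟨_, hq⟩ <;> rw [hq]
  exacts [(TA_adj_e2 D b_v m).symm, (TA_adj_e1 D b_v m).symm]

open scoped Classical in
/-- Lift a single step of `T` to a walk in `TA`. -/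
noncomputable def liftStep {p q : D.B} (h : D.T.Adj p q) :
    (TA D b_v m).Walk (inl p) (inl q) :=
  if hn : s(p, q) = s(b_v, m) then
    Walk.cons (adj_c_left D b_v m hn) (Walk.cons (adj_c_right D b_v m hn) Walk.nil)
  else Walk.cons (TA_adj_old D b_v m h hn) Walk.nil

lemma liftStep_edges {p q : D.B} (h : D.T.Adj p q) {e' : Sym2 (D.B ⊕ Unit)}
    (he : e' ∈ (liftStep D b_v m h).edges) :
    (e' = s(inl p, inl q) ∧ s(p, q) ≠ s(b_v, m)) ∨
    ((e' = s(inl b_v, inr ()) ∨ e' = s(inl m, inr ())) ∧ s(p, q) = s(b_v, m)) := by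
  rw [liftStep] at he
  split_ifs at he with hn
  · right
    refine ⟨?_, hn⟩
    simp only [Walk.edges_cons, Walk.edges_nil, List.mem_cons, List.not_mem_nil,
      or_false] at he
    rcases Sym2.eq_iff.mp hn with ⟨hp, hq⟩ | ⟨hp, hq⟩ <;> rcases he with rfl | rfl
    · exact Or.inl (by rw [hp])
    · exact Or.inr (by rw [hq]; exact Sym2.eq_swap)
    · exact Or.inr (by rw [hp])
    · exact Or.inl (by rw [hq]; exact Sym2.eq_swap)
  · left
    simp only [Walk.edges_cons, Walk.edges_nil, List.mem_cons, List.not_mem_nil,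
      or_false] at he
    exact ⟨he, hn⟩

lemma liftStep_support {p q : D.B} (h : D.T.Adj p q) {x : D.B ⊕ Unit}
    (hx : x ∈ (liftStep D b_v m h).support) :
    x = inl p ∨ x = inl q ∨ (x = inr () ∧ s(p, q) = s(b_v, m)) := by
  rw [liftStep] at hx
  split_ifs at hx with hn
  · simp only [Walk.support_cons, Walk.support_nil, List.mem_cons, List.not_mem_nil,
      or_false] at hx
    rcases hx with rfl | rfl | rfl
    · exact Or.inl rfl
    · exact Or.inr (Or.inr ⟨rfl, hn⟩)
    · exact Or.inr (Or.inl rfl)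
  · simp only [Walk.support_cons, Walk.support_nil, List.mem_cons, List.not_mem_nil,
      or_false] at hx
    rcases hx with rfl | rfl
    · exact Or.inl rfl
    · exact Or.inr (Or.inl rfl)

/-- Lift a walk of `T` to a walk in `TA`. -/
noncomputable def lift : {p q : D.B} → D.T.Walk p q → (TA D b_v m).Walk (inl p) (inl q)
  | _, _, Walk.nil => Walk.nil
  | _, _, Walk.cons h r => (liftStep D b_v m h).append (lift r)

lemma lift_edges {p q : D.B} (r : D.T.Walk p q) {e' : Sym2 (D.B ⊕ Unit)}
    (he : e' ∈ (lift D b_v m r).edges) :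
    (∃ e ∈ r.edges, e' = Sym2.map inl e ∧ e ≠ s(b_v, m)) ∨
    ((e' = s(inl b_v, inr ()) ∨ e' = s(inl m, inr ())) ∧ s(b_v, m) ∈ r.edges) := by
  induction r with
  | nil => simp [lift] at he
  | cons h r ih =>
    rw [lift, Walk.edges_append, List.mem_append] at he
    rcases he with he | he
    · rcases liftStep_edges D b_v m h he with ⟨rfl, hn⟩ | ⟨hor, hn⟩
      · exact Or.inl ⟨s(_, _), List.mem_cons_self, (Sym2.map_pair_eq _ _ _).symm, hn⟩
      · exact Or.inr ⟨hor, hn ▸ List.mem_cons_self⟩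
    · rcases ih he with ⟨e, hee, hmap, hne⟩ | ⟨hor, hmem⟩
      · exact Or.inl ⟨e, List.mem_cons_of_mem _ hee, hmap, hne⟩
      · exact Or.inr ⟨hor, List.mem_cons_of_mem _ hmem⟩

lemma lift_support {p q : D.B} (r : D.T.Walk p q) {x : D.B ⊕ Unit}
    (hx : x ∈ (lift D b_v m r).support) :
    (∃ y ∈ r.support, x = inl y) ∨ (x = inr () ∧ s(b_v, m) ∈ r.edges) := by
  induction r with
  | nil =>
    simp only [lift, Walk.support_nil, List.mem_singleton] at hx
    subst hx
    exact Or.inl ⟨_, Walk.start_mem_support _, rfl⟩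
  | cons h r ih =>
    rw [lift, Walk.mem_support_append_iff] at hx
    rcases hx with hx | hx
    · rcases liftStep_support D b_v m h hx with rfl | rfl | ⟨rfl, hn⟩
      · exact Or.inl ⟨_, Walk.start_mem_support _, rfl⟩
      · exact Or.inl ⟨_, List.mem_cons_of_mem _ (Walk.start_mem_support r), rfl⟩
      · exact Or.inr ⟨rfl, hn ▸ List.mem_cons_self⟩
    · rcases ih hx with ⟨y, hy, rfl⟩ | ⟨rfl, hmem⟩
      · exact Or.inl ⟨y, List.mem_cons_of_mem _ hy, rfl⟩
      · exact Or.inr ⟨rfl, List.mem_cons_of_mem _ hmem⟩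

lemma TA_bridge_old (hadj : D.T.Adj b_v m) {p q : D.B} (h : D.T.Adj p q)
    (hn : s(p, q) ≠ s(b_v, m)) : (TA D b_v m).IsBridge s(inl p, inl q) := by
  rw [isBridge_iff]
  refine fun hr => ?_
  have hbr : ¬(D.T \ fromEdgeSet {s(p, q)}).Reachable p q :=
    (isBridge_iff.mp (isAcyclic_iff_forall_edge_isBridge.mp D.isTree.IsAcyclic
      ((mem_edgeSet _).mpr h)))
  set Td := D.T \ fromEdgeSet {s(p, q)} with hTd
  have hbm : Td.Adj b_v m := by
    rw [hTd, sdiff_adj, fromEdgeSet_adj]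
    exact ⟨hadj, fun hc => hn hc.1.symm⟩
  have hinv : ∀ ⦃x y : D.B ⊕ Unit⦄,
      ((TA D b_v m) \ fromEdgeSet {s(inl p, inl q)}).Adj x y →
      ((Sum.elim (fun b => Td.Reachable p b) fun _ => Td.Reachable p b_v) x ↔
       (Sum.elim (fun b => Td.Reachable p b) fun _ => Td.Reachable p b_v) y) := by
    intro x y hxy
    rw [sdiff_adj, fromEdgeSet_adj] at hxy
    obtain ⟨hadj', hne⟩ := hxy
    have hne' : s(x, y) ≠ s(inl p, inl q) := fun hc => hne ⟨hc, hadj'.ne⟩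
    rcases (TA_adj D b_v m).mp hadj' with ⟨p', q', rfl, rfl, h', hn'⟩ | ⟨hor, rfl⟩ | ⟨hor, rfl⟩
    · have hne'' : s(p', q') ≠ s(p, q) := by
        intro hc
        apply hne'
        have := congrArg (Sym2.map (inl : D.B → D.B ⊕ Unit)) hc
        rwa [Sym2.map_pair_eq, Sym2.map_pair_eq] at this
      have hstep : Td.Adj p' q' := by
        rw [hTd, sdiff_adj, fromEdgeSet_adj]
        exact ⟨h', fun hc => hne'' hc.1⟩
      exact ⟨fun hh => hh.trans hstep.reachable, fun hh => hh.trans hstep.symm.reachable⟩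
    · rcases hor with rfl | rfl
      · exact Iff.rfl
      · exact ⟨fun hh => hh.trans hbm.symm.reachable, fun hh => hh.trans hbm.reachable⟩
    · rcases hor with rfl | rfl
      · exact Iff.rfl
      · exact ⟨fun hh => hh.trans hbm.reachable, fun hh => hh.trans hbm.symm.reachable⟩
  have := reach_invar _ hinv hr
  simp only [Sum.elim_inl] at this
  exact hbr (this.mp (Reachable.refl p))

lemma TA_bridge_e1 (hadj : D.T.Adj b_v m) : (TA D b_v m).IsBridge s(inl b_v, inr ()) := by
  rw [isBridge_iff]
  refine fun hr => ?_
  have hbr : ¬(D.T \ fromEdgeSet {s(b_v, m)}).Reachable b_v m :=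
    (isBridge_iff.mp (isAcyclic_iff_forall_edge_isBridge.mp D.isTree.IsAcyclic
      ((mem_edgeSet _).mpr hadj)))
  set Td := D.T \ fromEdgeSet {s(b_v, m)} with hTd
  have hinv : ∀ ⦃x y : D.B ⊕ Unit⦄,
      ((TA D b_v m) \ fromEdgeSet {s(inl b_v, inr ())}).Adj x y →
      ((Sum.elim (fun b => Td.Reachable b_v b) fun _ => False) x ↔
       (Sum.elim (fun b => Td.Reachable b_v b) fun _ => False) y) := by
    intro x y hxy
    rw [sdiff_adj, fromEdgeSet_adj] at hxy
    obtain ⟨hadj', hne⟩ := hxy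
    have hne' : s(x, y) ≠ s(inl b_v, inr ()) := fun hc => hne ⟨hc, hadj'.ne⟩
    rcases (TA_adj D b_v m).mp hadj' with ⟨p', q', rfl, rfl, h', hn'⟩ | ⟨hor, rfl⟩ | ⟨hor, rfl⟩
    · have hstep : Td.Adj p' q' := by
        rw [hTd, sdiff_adj, fromEdgeSet_adj]
        exact ⟨h', fun hc => hn' hc.1⟩
      exact ⟨fun hh => hh.trans hstep.reachable, fun hh => hh.trans hstep.symm.reachable⟩
    · rcases hor with rfl | rfl
      · exact absurd rfl hne'
      · simp only [Sum.elim_inl, Sum.elim_inr, iff_false]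
        exact hbr
    · rcases hor with rfl | rfl
      · exact absurd Sym2.eq_swap hne'
      · simp only [Sum.elim_inl, Sum.elim_inr, false_iff]
        exact hbr
  have := reach_invar _ hinv hr
  simp only [Sum.elim_inl, Sum.elim_inr, iff_false] at this
  exact this (Reachable.refl b_v)

lemma TA_bridge_e2 (hadj : D.T.Adj b_v m) : (TA D b_v m).IsBridge s(inl m, inr ()) := by
  rw [isBridge_iff]
  refine fun hr => ?_
  have hbr : ¬(D.T \ fromEdgeSet {s(b_v, m)}).Reachable b_v m :=
    (isBridge_iff.mp (isAcyclic_iff_forall_edge_isBridge.mp D.isTree.IsAcyclic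
      ((mem_edgeSet _).mpr hadj)))
  set Td := D.T \ fromEdgeSet {s(b_v, m)} with hTd
  have hinv : ∀ ⦃x y : D.B ⊕ Unit⦄,
      ((TA D b_v m) \ fromEdgeSet {s(inl m, inr ())}).Adj x y →
      ((Sum.elim (fun b => Td.Reachable b_v b) fun _ => True) x ↔
       (Sum.elim (fun b => Td.Reachable b_v b) fun _ => True) y) := by
    intro x y hxy
    rw [sdiff_adj, fromEdgeSet_adj] at hxy
    obtain ⟨hadj', hne⟩ := hxy
    have hne' : s(x, y) ≠ s(inl m, inr ()) := fun hc => hne ⟨hc, hadj'.ne⟩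
    rcases (TA_adj D b_v m).mp hadj' with ⟨p', q', rfl, rfl, h', hn'⟩ | ⟨hor, rfl⟩ | ⟨hor, rfl⟩
    · have hstep : Td.Adj p' q' := by
        rw [hTd, sdiff_adj, fromEdgeSet_adj]
        exact ⟨h', fun hc => hn' hc.1⟩
      exact ⟨fun hh => hh.trans hstep.reachable, fun hh => hh.trans hstep.symm.reachable⟩
    · rcases hor with rfl | rfl
      · simp only [Sum.elim_inl, Sum.elim_inr, iff_true]
        exact Reachable.refl b_v
      · exact absurd rfl hne'
    · rcases hor with rfl | rfl
      · simp only [Sum.elim_inl, Sum.elim_inr, true_iff]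
        exact Reachable.refl b_v
      · exact absurd Sym2.eq_swap hne'
  have := reach_invar _ hinv hr
  simp only [Sum.elim_inl, Sum.elim_inr, iff_true] at this
  exact hbr this

lemma TA_isTree (hadj : D.T.Adj b_v m) : (TA D b_v m).IsTree := by
  constructor
  · have hc : ∀ x : D.B ⊕ Unit, (TA D b_v m).Reachable x (inl b_v) := by
      rintro (a | u)
      · obtain ⟨r⟩ := D.isTree.isConnected.preconnected a b_v
        exact ⟨lift D b_v m r⟩
      · cases u; exact (TA_adj_e1 D b_v m).symm.reachable
    exact ⟨fun x y => (hc x).trans (hc y).symm⟩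
  · rw [isAcyclic_iff_forall_edge_isBridge]
    intro e he
    induction e with
    | _ x y =>
      rw [mem_edgeSet] at he
      rcases (TA_adj D b_v m).mp he with ⟨p, q, rfl, rfl, h, hn⟩ | ⟨hor, rfl⟩ | ⟨hor, rfl⟩
      · exact TA_bridge_old D b_v m hadj h hn
      · rcases hor with rfl | rfl
        exacts [TA_bridge_e1 D b_v m hadj, TA_bridge_e2 D b_v m hadj]
      · rw [Sym2.eq_swap]
        rcases hor with rfl | rfl
        exacts [TA_bridge_e1 D b_v m hadj, TA_bridge_e2 D b_v m hadj]

variable {v w : V}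

lemma caseA_width {b_w : D.B} (hvw : G.Adj v w) (hv : v ∈ D.bag b_v) (hw : w ∈ D.bag b_w)
    (hadj : D.T.Adj b_v m) (q0 : D.T.Walk m b_w)
    (hq0e : s(b_v, m) ∉ q0.edges) (hq0s : b_v ∉ q0.support) :
    (mkD' v w D (TA D b_v m) (TA_isTree D b_v m hadj)).width ≤ D.width := by
  haveI := D.finB
  set D' := mkD' v w D (TA D b_v m) (TA_isTree D b_v m hadj) with hD'
  haveI : Nonempty D'.B := ⟨inr ()⟩
  have hl₀ : s(b_v, m) ∈ D.T.edgeSet := (mem_edgeSet _).mpr hadj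
  have hbr : ¬(D.T \ fromEdgeSet {s(b_v, m)}).Reachable b_v m :=
    (isBridge_iff.mp (isAcyclic_iff_forall_edge_isBridge.mp D.isTree.IsAcyclic hl₀))
  have hq0d : (D.T \ fromEdgeSet {s(b_v, m)}).Reachable m b_w :=
    ⟨q0.transfer _ fun e he => mem_sdiff_edgeSet (q0.edges_subset_edgeSet he)
      (fun hc => hq0e (hc ▸ he))⟩
  have hK2 : ∀ r : D.T.Walk b_v b_w, s(b_v, m) ∈ r.edges := by
    intro r
    by_contra hno
    have hre : (D.T \ fromEdgeSet {s(b_v, m)}).Reachable b_v b_w :=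
      ⟨r.transfer _ fun e he => mem_sdiff_edgeSet (r.edges_subset_edgeSet he)
        (fun hc => hno (hc ▸ he))⟩
    exact hbr (hre.trans hq0d.symm)
  have hsvw : s(v, w) ∈ D.linkAdh s(b_v, m) :=
    ⟨(mem_edgeSet _).mpr hvw, v, w, b_v, b_w, rfl, hv, hw, hK2⟩
  -- bound for old links
  have hold : ∀ p q : D.B, D.T.Adj p q → s(p, q) ≠ s(b_v, m) →
      (D'.linkAdh s(inl p, inl q)).ncard ≤ D.width := by
    intro p q hpq hn
    refine le_trans (ncard_le_of_subset_image (gmap_inj v w w) ?_)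
      (le_width_link D ((mem_edgeSet _).mpr hpq))
    intro e' he'
    rcases linkAdh_elim hv hw he' with
      ⟨a, b, p₀, q₀, rfl, hab, hne, hap, hbq, H⟩ | ⟨rfl, H⟩ | ⟨rfl, H⟩
    · refine ⟨s(a, b), ⟨(mem_edgeSet _).mpr hab, a, b, p₀, q₀, rfl, hap, hbq, ?_⟩,
        (gmap_apply_ne (z := w) hne).trans (Sym2.map_pair_eq _ _ _)⟩
      intro r
      have hh := H (lift D b_v m r)
      rcases lift_edges D b_v m r hh with ⟨e, hee, hmap, hne₂⟩ | ⟨hor, _⟩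
      · obtain rfl : e = s(p, q) := Sym2.map.injective inl_injective
          (hmap.symm.trans (Sym2.map_pair_eq inl p q).symm)
        exact hee
      · exfalso
        rcases hor with hc | hc <;> exact sym2_inl_ne hc
    · exfalso
      have hh : s(inl p, inl q) ∈ (Walk.cons (TA_adj_e1 D b_v m) Walk.nil).edges :=
        H (Walk.cons (TA_adj_e1 D b_v m) Walk.nil)
      simp only [Walk.edges_cons, Walk.edges_nil, List.mem_singleton] at hh
      exact sym2_inl_ne hh
    · refine ⟨s(v, w), ⟨(mem_edgeSet _).mpr hvw, v, w, b_v, b_w, rfl, hv, hw, ?_⟩,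
        gmap_apply_eq v w w⟩
      intro r
      have hh : s(inl p, inl q) ∈ ((lift D b_v m r.reverse).append
          (Walk.cons (TA_adj_e1 D b_v m) Walk.nil)).edges := H ((lift D b_v m r.reverse).append
        (Walk.cons (TA_adj_e1 D b_v m) Walk.nil))
      rw [Walk.edges_append, List.mem_append] at hh
      rcases hh with hmem | hmem
      · rcases lift_edges D b_v m r.reverse hmem with ⟨e, hee, hmap, hne₂⟩ | ⟨hor, _⟩
        · obtain rfl : e = s(p, q) := Sym2.map.injective inl_injective
            (hmap.symm.trans (Sym2.map_pair_eq inl p q).symm)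
          rw [Walk.edges_reverse, List.mem_reverse] at hee
          exact hee
        · exfalso
          rcases hor with hc | hc <;> exact sym2_inl_ne hc
      · exfalso
        simp only [Walk.edges_cons, Walk.edges_nil, List.mem_singleton] at hmem
        exact sym2_inl_ne hmem
  -- bound for the first new link
  have he1 : (D'.linkAdh s(inl b_v, inr ())).ncard ≤ D.width := by
    refine le_trans (ncard_le_of_subset_image (gmap_inj v w v) ?_) (le_width_link D hl₀)
    intro e' he'
    rcases linkAdh_elim hv hw he' with
      ⟨a, b, p₀, q₀, rfl, hab, hne, hap, hbq, H⟩ | ⟨rfl, H⟩ | ⟨rfl, H⟩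
    · refine ⟨s(a, b), ⟨(mem_edgeSet _).mpr hab, a, b, p₀, q₀, rfl, hap, hbq, ?_⟩,
        (gmap_apply_ne (z := v) hne).trans (Sym2.map_pair_eq _ _ _)⟩
      intro r
      have hh := H (lift D b_v m r)
      rcases lift_edges D b_v m r hh with ⟨e, hee, hmap, hne₂⟩ | ⟨_, hl⟩
      · exact absurd hmap.symm map_inl_ne_inr
      · exact hl
    · exact ⟨s(v, w), ⟨(mem_edgeSet _).mpr hvw, v, w, b_v, b_w, rfl, hv, hw, hK2⟩,
        gmap_apply_eq v w v⟩
    · exfalso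
      have hh : s(inl b_v, inr ()) ∈ ((lift D b_v m q0.reverse).append
          (Walk.cons (TA_adj_e2 D b_v m) Walk.nil)).edges := H ((lift D b_v m q0.reverse).append
        (Walk.cons (TA_adj_e2 D b_v m) Walk.nil))
      rw [Walk.edges_append, List.mem_append] at hh
      rcases hh with hmem | hmem
      · rcases lift_edges D b_v m q0.reverse hmem with ⟨e, hee, hmap, hne₂⟩ | ⟨_, hl⟩
        · exact absurd hmap.symm map_inl_ne_inr
        · rw [Walk.edges_reverse, List.mem_reverse] at hl
          exact hq0e hl
      · simp only [Walk.edges_cons, Walk.edges_nil, List.mem_singleton] at hmem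
        exact hadj.ne (sym2_pendant_inj hmem)
  -- bound for the second new link
  have he2 : (D'.linkAdh s(inl m, inr ())).ncard ≤ D.width := by
    refine le_trans (ncard_le_of_subset_image (gmap_inj v w w) ?_) (le_width_link D hl₀)
    intro e' he'
    rcases linkAdh_elim hv hw he' with
      ⟨a, b, p₀, q₀, rfl, hab, hne, hap, hbq, H⟩ | ⟨rfl, H⟩ | ⟨rfl, H⟩
    · refine ⟨s(a, b), ⟨(mem_edgeSet _).mpr hab, a, b, p₀, q₀, rfl, hap, hbq, ?_⟩,
        (gmap_apply_ne (z := w) hne).trans (Sym2.map_pair_eq _ _ _)⟩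
      intro r
      have hh := H (lift D b_v m r)
      rcases lift_edges D b_v m r hh with ⟨e, hee, hmap, hne₂⟩ | ⟨_, hl⟩
      · exact absurd hmap.symm map_inl_ne_inr
      · exact hl
    · exfalso
      have hh : s(inl m, inr ()) ∈ (Walk.cons (TA_adj_e1 D b_v m) Walk.nil).edges :=
        H (Walk.cons (TA_adj_e1 D b_v m) Walk.nil)
      simp only [Walk.edges_cons, Walk.edges_nil, List.mem_singleton] at hh
      exact hadj.ne (sym2_pendant_inj hh).symm
    · exact ⟨s(v, w), ⟨(mem_edgeSet _).mpr hvw, v, w, b_v, b_w, rfl, hv, hw, hK2⟩,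
        gmap_apply_eq v w w⟩
  -- bound for old nodes
  have hnode : ∀ n : D.B, (D'.bag (inl n)).ncard + (D'.nodeAdh (inl n)).ncard ≤ D.width := by
    intro n
    have hbag : (D'.bag (inl n)).ncard = (D.bag n).ncard :=
      Set.ncard_image_of_injective _ inl_injective
    rw [hbag]
    refine le_trans (Nat.add_le_add_left ?_ _) (le_width_node D n)
    refine ncard_le_of_subset_image (gmap_inj v w w) ?_
    intro e' he'
    rcases nodeAdh_elim hv hw he' with
      ⟨a, b, p₀, q₀, rfl, hab, hne, hap, hbq, hpn, hqn, H⟩ |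
      ⟨rfl, hbn, _, H⟩ | ⟨rfl, hbn, _, H⟩
    · refine ⟨s(a, b), ⟨(mem_edgeSet _).mpr hab, a, b, p₀, q₀, rfl, hap, hbq,
        fun hc => hpn (by rw [hc]), fun hc => hqn (by rw [hc]), ?_⟩,
        (gmap_apply_ne (z := w) hne).trans (Sym2.map_pair_eq _ _ _)⟩
      intro r
      have hh := H (lift D b_v m r)
      rcases lift_support D b_v m r hh with ⟨y, hy, heq⟩ | ⟨heq, _⟩
      · obtain rfl := inl_injective heq
        exact hy
      · exact absurd heq inl_ne_inr
    · exfalso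
      have hh := H (Walk.cons (TA_adj_e1 D b_v m) Walk.nil)
      simp only [Walk.support_cons, Walk.support_nil, List.mem_cons, List.mem_singleton,
        List.not_mem_nil, or_false] at hh
      rcases hh with hc | hc
      · exact hbn hc.symm
      · exact inl_ne_inr hc
    · have hnbv : (inl n : D.B ⊕ Unit) ≠ inl b_v := by
        intro hc
        have hh := H ((lift D b_v m q0.reverse).append
          (Walk.cons (TA_adj_e2 D b_v m) Walk.nil))
        rw [Walk.mem_support_append_iff] at hh
        rcases hh with hmem | hmem
        · rcases lift_support D b_v m q0.reverse hmem with ⟨y, hy, heq⟩ | ⟨heq, _⟩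
          · have hyb : y = b_v := inl_injective (heq.symm.trans hc)
            rw [Walk.support_reverse, List.mem_reverse, hyb] at hy
            exact hq0s hy
          · exact inl_ne_inr heq
        · simp only [Walk.support_cons, Walk.support_nil, List.mem_cons, List.mem_singleton,
            List.not_mem_nil, or_false] at hmem
          rcases hmem with hc' | hc'
          · exact hadj.ne (inl_injective (hc.symm.trans hc'))
          · exact inl_ne_inr hc'
      refine ⟨s(v, w), ⟨(mem_edgeSet _).mpr hvw, v, w, b_v, b_w, rfl, hv, hw,
        fun hc => hnbv (by rw [hc]), fun hc => hbn (by rw [hc]), ?_⟩,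
        gmap_apply_eq v w w⟩
      intro r
      have hh := H ((lift D b_v m r.reverse).append
        (Walk.cons (TA_adj_e1 D b_v m) Walk.nil))
      rw [Walk.mem_support_append_iff] at hh
      rcases hh with hmem | hmem
      · rcases lift_support D b_v m r.reverse hmem with ⟨y, hy, heq⟩ | ⟨heq, _⟩
        · obtain rfl := inl_injective heq
          rw [Walk.support_reverse, List.mem_reverse] at hy
          exact hy
        · exact absurd heq inl_ne_inr
      · simp only [Walk.support_cons, Walk.support_nil, List.mem_cons, List.mem_singleton,
          List.not_mem_nil, or_false] at hmem
        rcases hmem with hc | hc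
        · exact absurd hc hnbv
        · exact absurd hc inl_ne_inr
  -- bound for the new node
  have hnodec : (D'.bag (inr ())).ncard + (D'.nodeAdh (inr ())).ncard ≤ D.width := by
    have hbag : (D'.bag (inr ())).ncard = 1 := Set.ncard_singleton _
    have hsub : D'.nodeAdh (inr ()) ⊆
        Sym2.map inl '' (D.linkAdh s(b_v, m) \ {s(v, w)}) := by
      intro e' he'
      rcases nodeAdh_elim hv hw he' with
        ⟨a, b, p₀, q₀, rfl, hab, hne, hap, hbq, hpn, hqn, H⟩ |
        ⟨_, _, hcn, _⟩ | ⟨_, _, hcn, _⟩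
      · refine ⟨s(a, b), ⟨⟨(mem_edgeSet _).mpr hab, a, b, p₀, q₀, rfl, hap, hbq, ?_⟩, hne⟩,
          Sym2.map_pair_eq _ _ _⟩
        intro r
        by_contra hno
        have hh := H (lift D b_v m r)
        rcases lift_support D b_v m r hh with ⟨y, _, heq⟩ | ⟨_, hl⟩
        · exact inl_ne_inr heq.symm
        · exact hno hl
      · exact absurd rfl hcn
      · exact absurd rfl hcn
    have hcard : (D'.nodeAdh (inr ())).ncard + 1 ≤ (D.linkAdh s(b_v, m)).ncard := by
      have h1 := ncard_le_of_subset_image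
        (Sym2.map.injective (inl_injective : Function.Injective (inl : V → V ⊕ Unit))) hsub
      have h2 := Set.ncard_diff_singleton_add_one hsvw (Set.toFinite _)
      omega
    rw [hbag]
    calc 1 + (D'.nodeAdh (inr ())).ncard = (D'.nodeAdh (inr ())).ncard + 1 := by omega
      _ ≤ (D.linkAdh s(b_v, m)).ncard := hcard
      _ ≤ D.width := le_width_link D hl₀
  apply width_le
  · intro l' hl'
    induction l' with
    | _ x y =>
      rw [mem_edgeSet] at hl'
      rcases (TA_adj D b_v m).mp hl' with ⟨p, q, rfl, rfl, h, hn⟩ | ⟨hor, rfl⟩ | ⟨hor, rfl⟩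
      · exact hold p q h hn
      · rcases hor with rfl | rfl
        exacts [he1, he2]
      · rcases hor with rfl | rfl
        exacts [(congrArg (fun l => (D'.linkAdh l).ncard)
          (Sym2.eq_swap (a := (inr () : D.B ⊕ Unit)) (b := inl b_v))).trans_le he1,
          (congrArg (fun l => (D'.linkAdh l).ncard)
          (Sym2.eq_swap (a := (inr () : D.B ⊕ Unit)) (b := inl m))).trans_le he2]
  · rintro (n | u)
    · exact hnode n
    · cases u; exact hnodec

end CaseA

end ScwAux

/-- Subdividing one edge of a finite connected simple graph does not increase screewidth. -/
theorem screewidth_subdivide_le [Finite V] (G : SimpleGraph V) (hG : G.Connected)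
    (v w : V) (hvw : G.Adj v w) :
    screewidth (subdivideEdge G v w) ≤ screewidth G := by
  classical
  have hne : {n | ∃ D : TreeCutDecomp G, D.width = n}.Nonempty :=
    ⟨(ScwAux.trivialDecomp G).width, ScwAux.trivialDecomp G, rfl⟩
  obtain ⟨D, hD⟩ : ∃ D : TreeCutDecomp G, D.width = screewidth G := Nat.sInf_mem hne
  obtain ⟨b_v, hv⟩ := D.covers v
  obtain ⟨b_w, hw⟩ := D.covers w
  suffices h : ∃ D' : TreeCutDecomp (subdivideEdge G v w), D'.width ≤ D.width by
    obtain ⟨D', hD'⟩ := h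
    calc screewidth (subdivideEdge G v w) ≤ D'.width := Nat.sInf_le ⟨D', rfl⟩
      _ ≤ D.width := hD'
      _ = screewidth G := hD
  by_cases hbb : b_v = b_w
  · subst hbb
    exact ⟨ScwAux.mkD' v w D (ScwAux.TB D b_v) (ScwAux.TB_isTree D b_v),
      ScwAux.caseB_width D b_v hvw hv hw⟩
  · haveI := D.finB
    obtain ⟨r⟩ := D.isTree.isConnected.preconnected b_v b_w
    obtain ⟨p, hp⟩ := r.toPath
    cases p with
    | nil => exact absurd rfl hbb
    | cons h q0 =>
      rw [Walk.cons_isPath_iff] at hp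
      exact ⟨_, ScwAux.caseA_width D b_v _ hvw hv hw h q0
        (fun hc => hp.2 (q0.fst_mem_support_of_mem_edges hc)) hp.2⟩
end
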